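/- Let n ≥ 1 and let s : S^{2n-1} → ℂ^{2n} be a continuous map such that for every x ∈ S^{2n-1} one has s(x) ≠ 0 and Σ_{k=1}^{2n} s_k(x)² = 0 (s is a nowhere-vanishing isotropic section). Then Re s(x) ≠ 0 and Im s(x) ≠ 0 for all x, and the two normalized maps S^{2n-1} → S^{2n-1} given by x ↦ Re s(x)/‖Re s(x)‖ and x ↦ Im s(x)/‖Im s(x)‖ are homotopic. In particular they have the same degree (homotopy class in π_{2n-1}(S^{2n-1})). -/

import Mathlib

/-!
Write `s(x) = a(x) + i b(x)`. Isotropy `∑ s_k² = 0` says `‖a‖² - ‖b‖² = 0` and `2⟪a, b⟫ = 0`, so `a` and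
`b` have equal length and are orthogonal; as `s ≠ 0`, neither vanishes. The normalized maps `u` and `v`
are then pointwise orthonormal, and `t ↦ cos (π t / 2) • u + sin (π t / 2) • v` rotates `u` into `v`
inside the unit sphere.
-/

open scoped RealInnerProductSpace

/-- The componentwise real part of a vector in `ℂ^m`, as a vector in `ℝ^m`. -/
noncomputable def reVec {m : ℕ} (v : EuclideanSpace ℂ (Fin m)) : EuclideanSpace ℝ (Fin m) :=
  WithLp.toLp 2 (fun k => (v k).re)

/-- The componentwise imaginary part of a vector in `ℂ^m`, as a vector in `ℝ^m`. -/
noncomputable def imVec {m : ℕ} (v : EuclideanSpace ℂ (Fin m)) : EuclideanSpace ℝ (Fin m) :=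
  WithLp.toLp 2 (fun k => (v k).im)

section Isotropic

variable {m : ℕ}

theorem continuous_reVec :
    Continuous (reVec : EuclideanSpace ℂ (Fin m) → EuclideanSpace ℝ (Fin m)) :=
  (PiLp.continuous_toLp _ _).comp <|
    continuous_pi fun k => Complex.continuous_re.comp (PiLp.continuous_apply 2 _ k)

theorem continuous_imVec :
    Continuous (imVec : EuclideanSpace ℂ (Fin m) → EuclideanSpace ℝ (Fin m)) :=
  (PiLp.continuous_toLp _ _).comp <|
    continuous_pi fun k => Complex.continuous_im.comp (PiLp.continuous_apply 2 _ k)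

theorem eq_zero_of_reVec_eq_zero_of_imVec_eq_zero {v : EuclideanSpace ℂ (Fin m)}
    (hre : reVec v = 0) (him : imVec v = 0) : v = 0 := by
  ext k
  exact Complex.ext (congrArg (· k) hre) (congrArg (· k) him)

theorem re_sum_sq (v : EuclideanSpace ℂ (Fin m)) :
    (∑ k, v k ^ 2).re = ‖reVec v‖ ^ 2 - ‖imVec v‖ ^ 2 := by
  rw [EuclideanSpace.real_norm_sq_eq, EuclideanSpace.real_norm_sq_eq]
  simp only [reVec, imVec, PiLp.toLp_apply, Complex.re_sum, sq, Complex.mul_re,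
    Finset.sum_sub_distrib]

theorem im_sum_sq (v : EuclideanSpace ℂ (Fin m)) :
    (∑ k, v k ^ 2).im = 2 * ⟪reVec v, imVec v⟫ := by
  simp only [PiLp.inner_apply, reVec, imVec, Complex.im_sum, sq, Complex.mul_im,
    Finset.mul_sum, RCLike.inner_apply, conj_trivial]
  exact Finset.sum_congr rfl fun k _ => by ring

variable {v : EuclideanSpace ℂ (Fin m)} (hiso : ∑ k, v k ^ 2 = 0)
include hiso

theorem norm_reVec_eq_norm_imVec_of_isotropic : ‖reVec v‖ = ‖imVec v‖ := by
  have h := re_sum_sq v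
  rw [hiso, Complex.zero_re, eq_comm, sub_eq_zero] at h
  exact (sq_eq_sq₀ (norm_nonneg _) (norm_nonneg _)).mp h

theorem inner_reVec_imVec_eq_zero_of_isotropic : ⟪reVec v, imVec v⟫ = 0 := by
  have h := im_sum_sq v
  rw [hiso, Complex.zero_im] at h
  linarith

theorem reVec_ne_zero_of_isotropic (hv : v ≠ 0) : reVec v ≠ 0 := fun hre =>
  hv <| eq_zero_of_reVec_eq_zero_of_imVec_eq_zero hre <| norm_eq_zero.mp <| by
    rw [← norm_reVec_eq_norm_imVec_of_isotropic hiso, hre, norm_zero]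

theorem imVec_ne_zero_of_isotropic (hv : v ≠ 0) : imVec v ≠ 0 := fun him =>
  hv <| eq_zero_of_reVec_eq_zero_of_imVec_eq_zero (norm_eq_zero.mp <| by
    rw [norm_reVec_eq_norm_imVec_of_isotropic hiso, him, norm_zero]) him

end Isotropic

section Sphere

variable {X E : Type*} [TopologicalSpace X] [NormedAddCommGroup E] [InnerProductSpace ℝ E]

theorem norm_cos_smul_add_sin_smul {u v : E} (hu : ‖u‖ = 1) (hv : ‖v‖ = 1) (huv : ⟪u, v⟫ = 0)
    (θ : ℝ) : ‖Real.cos θ • u + Real.sin θ • v‖ = 1 := by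
  have h : ‖Real.cos θ • u + Real.sin θ • v‖ ^ 2 = 1 := by
    rw [norm_add_sq_real, norm_smul, norm_smul, real_inner_smul_left, real_inner_smul_right, huv,
      hu, hv, Real.norm_eq_abs, Real.norm_eq_abs]
    simp only [mul_zero, mul_one, sq_abs, Real.cos_sq_add_sin_sq, add_zero]
  rwa [pow_eq_one_iff_of_nonneg (norm_nonneg _) two_ne_zero] at h

noncomputable def ContinuousMap.normalize (a : C(X, E)) (ha : ∀ x, a x ≠ 0) :
    C(X, Metric.sphere (0 : E) 1) where
  toFun x := ⟨‖a x‖⁻¹ • a x, mem_sphere_zero_iff_norm.mpr (norm_smul_inv_norm (ha x))⟩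
  continuous_toFun :=
    ((a.continuous.norm.inv₀ fun x => norm_ne_zero_iff.mpr (ha x)).smul a.continuous).subtype_mk _

theorem ContinuousMap.inner_normalize_eq_zero {a b : C(X, E)} (ha : ∀ x, a x ≠ 0)
    (hb : ∀ x, b x ≠ 0) {x : X} (hab : ⟪a x, b x⟫ = 0) :
    ⟪(a.normalize ha x : E), b.normalize hb x⟫ = 0 := by
  simp only [normalize, coe_mk, real_inner_smul_left, real_inner_smul_right, hab, mul_zero]

/-- The homotopy is a quarter turn in the plane spanned by `f x` and `g x`. -/
theorem ContinuousMap.homotopic_of_inner_eq_zero (f g : C(X, Metric.sphere (0 : E) 1))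
    (hfg : ∀ x, ⟪(f x : E), g x⟫ = 0) : f.Homotopic g := by
  let H : unitInterval × X → E := fun p =>
    Real.cos (Real.pi / 2 * p.1) • (f p.2 : E) + Real.sin (Real.pi / 2 * p.1) • (g p.2 : E)
  have hH : Continuous H := by fun_prop
  have hH_mem : ∀ p, H p ∈ Metric.sphere (0 : E) 1 := fun p => mem_sphere_zero_iff_norm.mpr <|
    norm_cos_smul_add_sin_smul (norm_eq_of_mem_sphere (f p.2)) (norm_eq_of_mem_sphere (g p.2))
      (hfg p.2) _
  exact ⟨{
    toFun := fun p => ⟨H p, hH_mem p⟩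
    continuous_toFun := hH.subtype_mk hH_mem
    map_zero_left := fun x => by ext1; simp [H]
    map_one_left := fun x => by ext1; simp [H] }⟩

end Sphere

theorem real_and_imaginary_winding_numbers_agree_general (n : ℕ)
    (s : C(Metric.sphere (0 : EuclideanSpace ℝ (Fin (2 * n))) 1, EuclideanSpace ℂ (Fin (2 * n))))
    (hne : ∀ x, s x ≠ 0)
    (hiso : ∀ x, ∑ k, (s x k) ^ 2 = 0) :
    (∀ x, reVec (s x) ≠ 0 ∧ imVec (s x) ≠ 0) ∧
    ∃ f g : C(Metric.sphere (0 : EuclideanSpace ℝ (Fin (2 * n))) 1,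
              Metric.sphere (0 : EuclideanSpace ℝ (Fin (2 * n))) 1),
      (∀ x, (f x : EuclideanSpace ℝ (Fin (2 * n))) = ‖reVec (s x)‖⁻¹ • reVec (s x)) ∧
      (∀ x, (g x : EuclideanSpace ℝ (Fin (2 * n))) = ‖imVec (s x)‖⁻¹ • imVec (s x)) ∧
      f.Homotopic g := by
  let a : C(_, EuclideanSpace ℝ (Fin (2 * n))) := ⟨reVec ∘ s, continuous_reVec.comp s.continuous⟩
  let b : C(_, EuclideanSpace ℝ (Fin (2 * n))) := ⟨imVec ∘ s, continuous_imVec.comp s.continuous⟩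
  have ha : ∀ x, a x ≠ 0 := fun x => reVec_ne_zero_of_isotropic (hiso x) (hne x)
  have hb : ∀ x, b x ≠ 0 := fun x => imVec_ne_zero_of_isotropic (hiso x) (hne x)
  refine ⟨fun x => ⟨ha x, hb x⟩, a.normalize ha, b.normalize hb, fun _ => rfl, fun _ => rfl, ?_⟩
  exact ContinuousMap.homotopic_of_inner_eq_zero _ _ fun x =>
    ContinuousMap.inner_normalize_eq_zero ha hb (inner_reVec_imVec_eq_zero_of_isotropic (hiso x))

/-- A nowhere-vanishing isotropic section `s : S^{2n-1} → ℂ^{2n}` has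
nowhere-vanishing real and imaginary parts, and the normalized maps
`x ↦ Re s(x)/‖Re s(x)‖` and `x ↦ Im s(x)/‖Im s(x)‖` from `S^{2n-1}` to itself are homotopic. -/
theorem real_and_imaginary_winding_numbers_agree (n : ℕ) (hn : 1 ≤ n)
    (s : C(Metric.sphere (0 : EuclideanSpace ℝ (Fin (2 * n))) 1, EuclideanSpace ℂ (Fin (2 * n))))
    (hne : ∀ x, s x ≠ 0)
    (hiso : ∀ x, ∑ k, (s x k) ^ 2 = 0) :
    (∀ x, reVec (s x) ≠ 0 ∧ imVec (s x) ≠ 0) ∧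
    ∃ f g : C(Metric.sphere (0 : EuclideanSpace ℝ (Fin (2 * n))) 1,
              Metric.sphere (0 : EuclideanSpace ℝ (Fin (2 * n))) 1),
      (∀ x, (f x : EuclideanSpace ℝ (Fin (2 * n))) = ‖reVec (s x)‖⁻¹ • reVec (s x)) ∧
      (∀ x, (g x : EuclideanSpace ℝ (Fin (2 * n))) = ‖imVec (s x)‖⁻¹ • imVec (s x)) ∧
      f.Homotopic g :=
  real_and_imaginary_winding_numbers_agree_general n s hne hiso
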